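/- The word 101 is tilde-non-isometric, with tilde-witnesses u = 1001 and v = 1111. -/
import Mathlib


/-- Edit operations on binary words: `R i` flips the bit at position `i`,
`S i` swaps the (distinct) bits at positions `i` and `i+1`. Positions are 0-based. -/
inductive TOp where
  | R (i : ℕ)
  | S (i : ℕ)
deriving DecidableEq

namespace TOp

def apply : TOp → List Bool → List Bool
  | R i, w => w.set i (!(w.getD i false))
  | S i, w => (w.set i (w.getD (i+1) false)).set (i+1) (w.getD i false)

def valid : TOp → List Bool → Prop
  | R i, w => i < w.length
  | S i, w => i + 1 < w.length ∧ w.getD i false ≠ w.getD (i+1) false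

/-- The set of positions modified by an operation. -/
def positions : TOp → Finset ℕ
  | R i => {i}
  | S i => {i, i+1}

/-- The (leftmost) position of an operation. -/
def pos : TOp → ℕ
  | R i => i
  | S i => i

def isR : TOp → Prop
  | R _ => True
  | S _ => False

def isS : TOp → Prop
  | R _ => False
  | S _ => True

end TOp

/-- All operations of a sequence are valid when applied successively starting from `w`. -/
def validSeq : List TOp → List Bool → Prop
  | [], _ => True
  | o :: os, w => o.valid w ∧ validSeq os (o.apply w)

def applySeq : List TOp → List Bool → List Bool
  | [], w => w
  | o :: os, w => applySeq os (o.apply w)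

/-- `ops` is a tilde-transformation from `u` to `v`. -/
def Transforms (ops : List TOp) (u v : List Bool) : Prop :=
  validSeq ops u ∧ applySeq ops u = v

/-- The swap-mismatch (tilde) distance between two words. -/
noncomputable def tdist (u v : List Bool) : ℕ :=
  sInf { n | ∃ ops : List TOp, ops.length = n ∧ Transforms ops u v }

/-- Each position of the word is modified at most once along the sequence. -/
def eachPosOnce (ops : List TOp) : Prop :=
  ops.Pairwise fun o o' => Disjoint o.positions o'.positions

/-- A minimal tilde-transformation: length `tdist u v`, each position changed at most once. -/
def MinimalTransf (ops : List TOp) (u v : List Bool) : Prop :=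
  Transforms ops u v ∧ ops.length = tdist u v ∧ eachPosOnce ops

/-- The list of all words `w_0 = u, w_1, …, w_h` visited by the transformation. -/
def trajectory (ops : List TOp) (u : List Bool) : List (List Bool) :=
  List.scanl (fun w o => o.apply w) u ops

/-- `w` avoids `f` as a factor. -/
def FFree (f w : List Bool) : Prop := ¬ f <:+: w

/-- All words along the transformation are `f`-free. -/
def FreeTransf (f : List Bool) (ops : List TOp) (u : List Bool) : Prop :=
  ∀ w ∈ trajectory ops u, FFree f w

/-- `f` is tilde-isometric. -/
def TildeIsometric (f : List Bool) : Prop :=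
  ∀ u v : List Bool, u.length = v.length → f.length < u.length →
    FFree f u → FFree f v →
      ∃ ops : List TOp, MinimalTransf ops u v ∧ FreeTransf f ops u

/-- `(u,v)` is a pair of tilde-witnesses for `f`. -/
def Witnesses (f u v : List Bool) : Prop :=
  u.length = v.length ∧ FFree f u ∧ FFree f v ∧ 2 ≤ tdist u v ∧
    ∀ ops : List TOp, MinimalTransf ops u v → ¬ FreeTransf f ops u

/-- Hamming distance between equal-length words (number of mismatch positions). -/
def hdist (u v : List Bool) : ℕ := ((u.zip v).filter fun p => p.1 != p.2).length


-- Auxiliary lemmas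

private lemma no_single_u (o : TOp) (hv : o.valid [true, false, false, true]) :
    o.apply [true, false, false, true] ≠ [true, true, true, true] := by
  cases o with
  | R i =>
    simp only [TOp.valid, List.length] at hv
    interval_cases i <;> decide
  | S i =>
    obtain ⟨h1, _⟩ := hv
    simp only [List.length] at h1
    have : i < 3 := by omega
    interval_cases i <;> decide

private lemma no_single_a (o : TOp) (hv : o.valid [false, false, false, true]) :
    o.apply [false, false, false, true] ≠ [true, true, true, true] := by
  cases o with
  | R i =>
    simp only [TOp.valid, List.length] at hv
    interval_cases i <;> decide
  | S i =>
    obtain ⟨h1, _⟩ := hv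
    simp only [List.length] at h1
    have : i < 3 := by omega
    interval_cases i <;> decide

private lemma no_single_b (o : TOp) (hv : o.valid [true, false, false, false]) :
    o.apply [true, false, false, false] ≠ [true, true, true, true] := by
  cases o with
  | R i =>
    simp only [TOp.valid, List.length] at hv
    interval_cases i <;> decide
  | S i =>
    obtain ⟨h1, _⟩ := hv
    simp only [List.length] at h1
    have : i < 3 := by omega
    interval_cases i <;> decide

private lemma no_single_c (o : TOp) (hv : o.valid [false, true, false, true]) :
    o.apply [false, true, false, true] ≠ [true, true, true, true] := by
  cases o with
  | R i =>
    simp only [TOp.valid, List.length] at hv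
    interval_cases i <;> decide
  | S i =>
    obtain ⟨h1, _⟩ := hv
    simp only [List.length] at h1
    have : i < 3 := by omega
    interval_cases i <;> decide

private lemma tdist_uv :
    tdist [true, false, false, true] [true, true, true, true] = 2 := by
  have hmem : (2 : ℕ) ∈ { n | ∃ ops : List TOp, ops.length = n ∧
      Transforms ops [true, false, false, true] [true, true, true, true] } := by
    refine ⟨[TOp.R 1, TOp.R 2], rfl, ?_, rfl⟩
    exact ⟨by simp [TOp.valid], by simp [TOp.valid, TOp.apply], trivial⟩
  apply le_antisymm
  · exact Nat.sInf_le hmem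
  · refine le_csInf ⟨2, hmem⟩ ?_
    rintro n ⟨ops, hlen, hval, happ⟩
    match ops, hlen with
    | [], hlen =>
      simp [applySeq] at happ
    | [o], hlen =>
      exact absurd happ (no_single_u o hval.1)
    | o1 :: o2 :: rest, hlen =>
      simp only [List.length] at hlen
      omega

private lemma witnesses_uv :
    Witnesses [true, false, true] [true, false, false, true] [true, true, true, true] := by
  refine ⟨rfl, by unfold FFree; decide, by unfold FFree; decide, by rw [tdist_uv], ?_⟩
  rintro ops ⟨⟨hval, happ⟩, hlen, _⟩ hfree
  rw [tdist_uv] at hlen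
  obtain ⟨o1, o2, rfl⟩ := List.length_eq_two.mp hlen
  obtain ⟨hv1, hv2, -⟩ := hval
  have happ' : o2.apply (o1.apply [true, false, false, true]) =
      [true, true, true, true] := happ
  have hm : FFree [true, false, true] (o1.apply [true, false, false, true]) :=
    hfree _ (by simp [trajectory, List.scanl])
  cases o1 with
  | R i =>
    simp only [TOp.valid, List.length] at hv1
    interval_cases i
    · exact no_single_a o2 hv2 happ'
    · exact hm (by decide)
    · exact hm (by decide)
    · exact no_single_b o2 hv2 happ'
  | S i =>
    obtain ⟨h1, h2⟩ := hv1
    simp only [List.length] at h1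
    have : i < 3 := by omega
    interval_cases i
    · exact no_single_c o2 hv2 happ'
    · exact h2 (by decide)
    · exact hm (by decide)

theorem stmt10 :
    ¬ TildeIsometric [true, false, true] ∧
    Witnesses [true, false, true] [true, false, false, true] [true, true, true, true] := by
  refine ⟨?_, witnesses_uv⟩
  intro h
  obtain ⟨ops, hmin, hfree⟩ :=
    h [true, false, false, true] [true, true, true, true] rfl (by norm_num)
      (by unfold FFree; decide) (by unfold FFree; decide)
  exact witnesses_uv.2.2.2.2 ops hmin hfree
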